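/- Any shape of the triangular lattice admitting a 6-fold rotational symmetry has its center of rotation at a lattice vertex: if S is a shape of G_D and ρ is a rotation of order 6 with ρ(S) = S, then the center of ρ is a vertex of G_D. -/

import Mathlib

/-- The sixth root of unity `ω = e^{iπ/3}` generating the triangular lattice. -/
noncomputable def omg : ℂ := Complex.exp ((Real.pi : ℂ) * Complex.I / 3)

/-- The vertex set of the triangular lattice drawing `G_D`: the Eisenstein integers. -/
def TriLattice : Set ℂ := {z | ∃ a b : ℤ, z = (a : ℂ) + (b : ℂ) * omg}

/-- An edge of `G_D`: a unit segment between two lattice vertices at distance 1. -/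
def IsEdgeGD (e : Set ℂ) : Prop :=
  ∃ u v : ℂ, u ∈ TriLattice ∧ v ∈ TriLattice ∧ ‖u - v‖ = 1 ∧ e = segment ℝ u v

/-- A face of `G_D`: a unit equilateral triangle with lattice vertices. -/
def IsFaceGD (f : Set ℂ) : Prop :=
  ∃ u v w : ℂ, u ∈ TriLattice ∧ v ∈ TriLattice ∧ w ∈ TriLattice ∧
    ‖u - v‖ = 1 ∧ ‖v - w‖ = 1 ∧ ‖u - w‖ = 1 ∧
    f = convexHull ℝ {u, v, w}

/-- A shape: a nonempty connected finite union of edges and faces of `G_D`. -/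
def IsShape (S : Set ℂ) : Prop :=
  S.Nonempty ∧ IsConnected S ∧
    ∃ F : Set (Set ℂ), F.Finite ∧ (∀ e ∈ F, IsEdgeGD e ∨ IsFaceGD e) ∧ S = ⋃₀ F

/-- The size of a shape: the number of lattice vertices lying in it. -/
noncomputable def shapeSize (S : Set ℂ) : ℕ := (TriLattice ∩ S).ncard

/-- `σ` is a similarity of the plane with (positive) ratio `r`. -/
def IsSimilarityMap (σ : ℂ → ℂ) (r : ℝ) : Prop :=
  ∀ p q : ℂ, dist (σ p) (σ q) = r * dist p q

/-- Two sets are similar (equivalent shapes). -/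
def SimilarShapes (S T : Set ℂ) : Prop :=
  ∃ σ : ℂ → ℂ, ∃ r : ℝ, 0 < r ∧ IsSimilarityMap σ r ∧ T = σ '' S

/-- A minimal shape: no equivalent shape has smaller size. -/
def MinimalShape (S : Set ℂ) : Prop :=
  IsShape S ∧ ∀ T : Set ℂ, IsShape T → SimilarShapes S T → shapeSize S ≤ shapeSize T

/-!
A point of a shape farthest from the centre `c` is an extreme point of one of its edges or
faces (the plane is strictly convex), hence a lattice vertex `p`; its image `ρ p` is another
farthest point, hence another vertex. The rotation factor `ζ` is a primitive sixth root of
unity, i.e. `ζ = ω` or `ζ = ω̄ = 1 - ω`, and multiplication by either preserves the lattice.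
Since `ζ (1 - ζ) = 1`, solving `ρ p - c = ζ (p - c)` gives `c = ζ (ρ p - p) + p`.
-/

open Set

theorem mem_extremePoints_of_forall_dist_le {E : Type*} [NormedAddCommGroup E]
    [NormedSpace ℝ E] [StrictConvexSpace ℝ E] {A : Set E} {c p : E} (hp : p ∈ A)
    (hmax : ∀ y ∈ A, dist y c ≤ dist p c) : p ∈ A.extremePoints ℝ := by
  refine mem_extremePoints_iff_left.2 ⟨hp, fun x hx y hy hpxy => ?_⟩
  by_cases hxy : x = y
  · subst hxy
    rw [openSegment_same] at hpxy
    exact hpxy.symm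
  · have hball := openSegment_subset_ball_of_ne (Metric.mem_closedBall.2 (hmax x hx))
      (Metric.mem_closedBall.2 (hmax y hy)) hxy hpxy
    exact absurd (Metric.mem_ball.1 hball) (lt_irrefl _)

section Rotation

variable {R : Type*} [CommRing R]

theorem iterate_rotation (c ζ : R) (j : ℕ) :
    (fun p => c + ζ * (p - c))^[j] = fun p => c + ζ ^ j * (p - c) := by
  induction j with
  | zero => funext p; simp
  | succ j ih =>
    funext p
    rw [Function.iterate_succ_apply', ih]
    ring

theorem iterate_rotation_eq_id_iff (c ζ : R) (j : ℕ) :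
    (fun p => c + ζ * (p - c))^[j] = id ↔ ζ ^ j = 1 := by
  rw [iterate_rotation]
  refine ⟨fun h => ?_, fun h => funext fun p => by simp [h]⟩
  simpa using congrFun h (c + 1)

theorem sq_eq_sub_one_of_pow_six_eq_one [IsDomain R] {ζ : R} (h6 : ζ ^ 6 = 1)
    (h2 : ζ ^ 2 ≠ 1) (h3 : ζ ^ 3 ≠ 1) : ζ ^ 2 = ζ - 1 := by
  have hfactor : (ζ ^ 3 - 1) * ((ζ + 1) * (ζ ^ 2 - ζ + 1)) = 0 := by linear_combination h6
  rcases mul_eq_zero.1 hfactor with h | h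
  · exact absurd (by linear_combination h) h3
  rcases mul_eq_zero.1 h with h | h
  · exact absurd (by linear_combination (ζ - 1) * h) h2
  · linear_combination h

end Rotation

section Lattice

theorem omg_re : omg.re = 1 / 2 := by
  have h : (Real.pi : ℂ) * Complex.I / 3 = ((Real.pi / 3 : ℝ) : ℂ) * Complex.I := by
    push_cast; ring
  rw [omg, h, Complex.exp_ofReal_mul_I_re, Real.cos_pi_div_three]

theorem omg_pow_three : omg ^ 3 = -1 := by
  have h : ((3 : ℕ) : ℂ) * ((Real.pi : ℂ) * Complex.I / 3) = Real.pi * Complex.I := by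
    push_cast; ring
  rw [omg, ← Complex.exp_nat_mul, h, Complex.exp_pi_mul_I]

theorem omg_sq : omg ^ 2 = omg - 1 := by
  have hfactor : (omg + 1) * (omg ^ 2 - omg + 1) = 0 := by linear_combination omg_pow_three
  have hne : omg + 1 ≠ 0 := fun h => by
    have := congrArg Complex.re h
    norm_num [omg_re] at this
  linear_combination (mul_eq_zero.1 hfactor).resolve_left hne

theorem eq_omg_or_eq_one_sub_omg {ζ : ℂ} (hζ : ζ ^ 2 = ζ - 1) :
    ζ = omg ∨ ζ = 1 - omg := by
  have hfactor : (ζ - omg) * (ζ - (1 - omg)) = 0 := by linear_combination hζ - omg_sq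
  simpa only [mul_eq_zero, sub_eq_zero] using hfactor

theorem add_mem_triLattice {z w : ℂ} (hz : z ∈ TriLattice) (hw : w ∈ TriLattice) :
    z + w ∈ TriLattice := by
  obtain ⟨a, b, rfl⟩ := hz
  obtain ⟨a', b', rfl⟩ := hw
  exact ⟨a + a', b + b', by push_cast; ring⟩

theorem sub_mem_triLattice {z w : ℂ} (hz : z ∈ TriLattice) (hw : w ∈ TriLattice) :
    z - w ∈ TriLattice := by
  obtain ⟨a, b, rfl⟩ := hz
  obtain ⟨a', b', rfl⟩ := hw
  exact ⟨a - a', b - b', by push_cast; ring⟩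

theorem mul_mem_triLattice_of_sq_eq_sub_one {ζ z : ℂ} (hζ : ζ ^ 2 = ζ - 1)
    (hz : z ∈ TriLattice) : ζ * z ∈ TriLattice := by
  obtain ⟨a, b, rfl⟩ := hz
  rcases eq_omg_or_eq_one_sub_omg hζ with rfl | rfl
  · exact ⟨-b, a + b, by push_cast; linear_combination (b : ℂ) * omg_sq⟩
  · exact ⟨a + b, -a, by push_cast; linear_combination -(b : ℂ) * omg_sq⟩

end Lattice

section Shape

theorem exists_finite_subset_triLattice_eq_convexHull {e : Set ℂ}
    (he : IsEdgeGD e ∨ IsFaceGD e) :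
    ∃ s : Set ℂ, s.Finite ∧ s ⊆ TriLattice ∧ e = convexHull ℝ s := by
  rcases he with ⟨u, v, hu, hv, -, rfl⟩ | ⟨u, v, w, hu, hv, hw, -, -, -, rfl⟩
  · exact ⟨{u, v}, toFinite _, by simp [insert_subset_iff, hu, hv], (convexHull_pair u v).symm⟩
  · exact ⟨{u, v, w}, toFinite _, by simp [insert_subset_iff, hu, hv, hw], rfl⟩

theorem IsShape.isCompact {S : Set ℂ} (hS : IsShape S) : IsCompact S := by
  obtain ⟨-, -, F, hF, hFpieces, rfl⟩ := hS
  rw [sUnion_eq_biUnion]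
  refine hF.isCompact_biUnion fun e he => ?_
  obtain ⟨s, hs, -, rfl⟩ := exists_finite_subset_triLattice_eq_convexHull (hFpieces e he)
  exact hs.isCompact_convexHull (𝕜 := ℝ)

theorem IsShape.exists_forall_dist_le {S : Set ℂ} (hS : IsShape S) (c : ℂ) :
    ∃ p ∈ S, ∀ y ∈ S, dist y c ≤ dist p c :=
  hS.isCompact.exists_isMaxOn hS.1 (continuous_id.dist continuous_const).continuousOn

theorem IsShape.mem_triLattice_of_forall_dist_le {S : Set ℂ} (hS : IsShape S) {c p : ℂ}
    (hp : p ∈ S) (hmax : ∀ y ∈ S, dist y c ≤ dist p c) : p ∈ TriLattice := by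
  obtain ⟨-, -, F, -, hFpieces, rfl⟩ := hS
  obtain ⟨e, heF, hpe⟩ := hp
  obtain ⟨s, -, hsL, rfl⟩ := exists_finite_subset_triLattice_eq_convexHull (hFpieces e heF)
  have hext := mem_extremePoints_of_forall_dist_le hpe
    fun y hy => hmax y (subset_sUnion_of_mem heF hy)
  exact hsL (extremePoints_convexHull_subset hext)

end Shape

/-- a shape with a 6-fold rotational symmetry has its center of rotation at
a lattice vertex. -/
theorem sixfold_center_is_vertex (S : Set ℂ) (c : ℂ) (θ : ℝ) (ρ : ℂ → ℂ)
    (hS : IsShape S)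
    (hρ : ρ = fun p => c + Complex.exp ((θ : ℂ) * Complex.I) * (p - c))
    (hinv : ρ '' S = S)
    (h6 : ρ^[6] = id)
    (hmin : ∀ j : ℕ, 0 < j → j < 6 → ρ^[j] ≠ id) :
    c ∈ TriLattice := by
  set ζ := Complex.exp ((θ : ℂ) * Complex.I) with hζ_def
  subst hρ
  have hζ : ζ ^ 2 = ζ - 1 := by
    have hne (j : ℕ) (hj0 : 0 < j) (hj6 : j < 6) : ζ ^ j ≠ 1 :=
      mt (iterate_rotation_eq_id_iff c ζ j).2 (hmin j hj0 hj6)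
    exact sq_eq_sub_one_of_pow_six_eq_one ((iterate_rotation_eq_id_iff c ζ 6).1 h6)
      (hne 2 (by norm_num) (by norm_num)) (hne 3 (by norm_num) (by norm_num))
  obtain ⟨p, hpS, hpmax⟩ := hS.exists_forall_dist_le c
  set q := c + ζ * (p - c) with hq_def
  have hqS : q ∈ S := hinv ▸ mem_image_of_mem _ hpS
  have hqp : dist q c = dist p c := by
    rw [dist_eq_norm, dist_eq_norm, hq_def, add_sub_cancel_left, norm_mul, hζ_def,
      Complex.norm_exp_ofReal_mul_I, one_mul]
  have hpL := hS.mem_triLattice_of_forall_dist_le hpS hpmax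
  have hqL := hS.mem_triLattice_of_forall_dist_le hqS (hqp ▸ hpmax)
  have hc : c = ζ * (q - p) + p := by linear_combination (c - p) * hζ
  rw [hc]
  exact add_mem_triLattice
    (mul_mem_triLattice_of_sq_eq_sub_one hζ (sub_mem_triLattice hqL hpL)) hpL
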